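/- The posterior expectation identity: for the bridge marginal q_t with Gaussian conditional q_t(x|x0,x1) = N(t x1 + (1-t)x0, t(1-t)σ²I), the marginal score decomposes as ∇log q_t(x) = (1/σ²)·(E_{q_t(·,·|x)}[(X1-x)/(1-t)] - E_{q_t(·,·|x)}[(x-X0)/t]). -/

import Mathlib

/-!
The score of the Gaussian kernel `N(μ, v I)` is `-(x - μ)/v`. For the bridge,
`μ = t x₁ + (1 - t) x₀` and `v = t(1 - t)σ²`, and splitting the residual as
`x - μ = t (x - x₁) + (1 - t) (x - x₀)` turns the conditional score into
`σ⁻² ((x₁ - x)/(1 - t) - (x - x₀)/t)`. Dividing `∇q_t = ∫ q ∇q_t(·|x₀,x₁)` by `q_t`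
replaces the joint density with the posterior weight `q_t(x|x₀,x₁) q(x₀,x₁) / q_t(x)`.
-/

open Real MeasureTheory

/-- Gaussian density on `ℝ^d` with mean `m` and covariance `v • I`. -/
noncomputable def gauss (d : ℕ) (m : EuclideanSpace ℝ (Fin d)) (v : ℝ)
    (x : EuclideanSpace ℝ (Fin d)) : ℝ :=
  (2 * π * v) ^ (-(d : ℝ) / 2) * Real.exp (-‖x - m‖ ^ 2 / (2 * v))

section GradientCalculus

variable {F : Type*} [NormedAddCommGroup F] [InnerProductSpace ℝ F] [CompleteSpace F]

theorem HasDerivAt.comp_hasGradientAt {g : ℝ → ℝ} {g' : ℝ} {f : F → ℝ} {f' : F} {x : F}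
    (hg : HasDerivAt g g' (f x)) (hf : HasGradientAt f f' x) :
    HasGradientAt (fun y => g (f y)) (g' • f') x := by
  rw [hasGradientAt_iff_hasFDerivAt] at hf ⊢
  refine (hg.hasFDerivAt.comp x hf).congr_fderiv ?_
  ext y
  simp [mul_comm]

theorem HasGradientAt.log {f : F → ℝ} {f' : F} {x : F} (hf : HasGradientAt f f' x)
    (hx : f x ≠ 0) : HasGradientAt (fun y => Real.log (f y)) ((f x)⁻¹ • f') x :=
  (Real.hasDerivAt_log hx).comp_hasGradientAt hf

theorem hasGradientAt_norm_sub_sq (m x : F) :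
    HasGradientAt (fun y => ‖y - m‖ ^ 2) ((2 : ℝ) • (x - m)) x := by
  rw [hasGradientAt_iff_hasFDerivAt]
  refine ((hasFDerivAt_id x).sub_const m).norm_sq.congr_fderiv ?_
  ext y
  simp

end GradientCalculus

theorem gauss_hasGradientAt (d : ℕ) (m : EuclideanSpace ℝ (Fin d)) (v : ℝ)
    (x : EuclideanSpace ℝ (Fin d)) :
    HasGradientAt (gauss d m v) (gauss d m v x • (-v⁻¹ • (x - m))) x := by
  have hprofile := ((Real.hasDerivAt_exp _).comp (‖x - m‖ ^ 2)
    ((hasDerivAt_neg _).div_const (2 * v))).const_mul ((2 * π * v) ^ (-(d : ℝ) / 2))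
  have hgrad : gauss d m v x • (-v⁻¹ • (x - m))
      = ((2 * π * v) ^ (-(d : ℝ) / 2) * (Real.exp (-‖x - m‖ ^ 2 / (2 * v)) * (-1 / (2 * v))))
        • (2 : ℝ) • (x - m) := by
    rw [smul_smul, smul_smul, gauss]
    ring_nf
  rw [hgrad]
  exact hprofile.comp_hasGradientAt (f := fun y => ‖y - m‖ ^ 2) (hasGradientAt_norm_sub_sq m x)

theorem bridge_score_eq {E : Type*} [AddCommGroup E] [Module ℝ E] {t : ℝ} (ht₀ : t ≠ 0)
    (ht₁ : 1 - t ≠ 0) (s : ℝ) (x x₀ x₁ : E) :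
    -(t * (1 - t) * s)⁻¹ • (x - (t • x₁ + (1 - t) • x₀))
      = s⁻¹ • ((1 - t)⁻¹ • (x₁ - x) - t⁻¹ • (x - x₀)) := by
  match_scalars <;> field_simp; ring

theorem marginal_score_posterior_decomposition_general
    (d : ℕ) (σ : ℝ) (t : ℝ) (ht : t ∈ Set.Ioo (0 : ℝ) 1)
    (qjoint : EuclideanSpace ℝ (Fin d) × EuclideanSpace ℝ (Fin d) → ℝ)
    (qcond : EuclideanSpace ℝ (Fin d) →
      EuclideanSpace ℝ (Fin d) × EuclideanSpace ℝ (Fin d) → ℝ)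
    (hqcond : ∀ y p, qcond y p = gauss d (t • p.2 + (1 - t) • p.1) (t * (1 - t) * σ ^ 2) y)
    (qt : EuclideanSpace ℝ (Fin d) → ℝ)
    (hqtpos : ∀ y, 0 < qt y)
    (x : EuclideanSpace ℝ (Fin d))
    (hqtdiff : DifferentiableAt ℝ qt x)
    -- regularity: differentiation under the integral sign is valid
    (hswap : gradient qt x = ∫ p, qjoint p • gradient (fun y => qcond y p) x)
    (hint1 : Integrable (fun p =>
      (qcond x p * qjoint p / qt x) • ((1 - t)⁻¹ • (p.2 - x))))
    (hint0 : Integrable (fun p =>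
      (qcond x p * qjoint p / qt x) • (t⁻¹ • (x - p.1)))) :
    gradient (fun y => Real.log (qt y)) x
      = (σ ^ 2)⁻¹ •
        ((∫ p, (qcond x p * qjoint p / qt x) • ((1 - t)⁻¹ • (p.2 - x)))
          - ∫ p, (qcond x p * qjoint p / qt x) • (t⁻¹ • (x - p.1))) := by
  obtain ⟨ht₀, ht₁⟩ := ht
  have hweighted : ∀ p, (qt x)⁻¹ • (qjoint p • gradient (fun y => qcond y p) x)
      = (σ ^ 2)⁻¹ • ((qcond x p * qjoint p / qt x) • ((1 - t)⁻¹ • (p.2 - x))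
          - (qcond x p * qjoint p / qt x) • (t⁻¹ • (x - p.1))) := by
    intro p
    have hcond : gradient (fun y => qcond y p) x = qcond x p
        • (-(t * (1 - t) * σ ^ 2)⁻¹ • (x - (t • p.2 + (1 - t) • p.1))) := by
      simp only [hqcond]
      exact (gauss_hasGradientAt d _ _ x).gradient
    rw [hcond, bridge_score_eq ht₀.ne' (sub_pos.2 ht₁).ne']
    match_scalars <;> ring
  rw [(hqtdiff.hasGradientAt.log (hqtpos x).ne').gradient, hswap, ← integral_smul]
  simp_rw [hweighted]
  rw [integral_smul, integral_sub hint1 hint0]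

/-- Posterior expectation identity: for the bridge marginal `q_t` with Gaussian conditional
`q_t(x|x0,x1) = N(t·x1+(1-t)·x0, t(1-t)σ²I)`, the marginal score decomposes as
`∇log q_t(x) = (1/σ²)(E_{q_t(·,·|x)}[(X1-x)/(1-t)] - E_{q_t(·,·|x)}[(x-X0)/t])`. -/
theorem marginal_score_posterior_decomposition
    (d : ℕ) (σ : ℝ) (hσ : 0 < σ) (t : ℝ) (ht : t ∈ Set.Ioo (0 : ℝ) 1)
    (qjoint : EuclideanSpace ℝ (Fin d) × EuclideanSpace ℝ (Fin d) → ℝ)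
    (qcond : EuclideanSpace ℝ (Fin d) →
      EuclideanSpace ℝ (Fin d) × EuclideanSpace ℝ (Fin d) → ℝ)
    (hqcond : ∀ y p, qcond y p = gauss d (t • p.2 + (1 - t) • p.1) (t * (1 - t) * σ ^ 2) y)
    (qt : EuclideanSpace ℝ (Fin d) → ℝ)
    (hqt : ∀ y, qt y = ∫ p, qcond y p * qjoint p)
    (hjpos : ∀ p, 0 < qjoint p)
    (hqtpos : ∀ y, 0 < qt y)
    (x : EuclideanSpace ℝ (Fin d))
    (hqtdiff : DifferentiableAt ℝ qt x)
    -- regularity: differentiation under the integral sign is valid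
    (hswap : gradient qt x = ∫ p, qjoint p • gradient (fun y => qcond y p) x)
    (hint : Integrable (fun p => qjoint p • gradient (fun y => qcond y p) x))
    (hint1 : Integrable (fun p =>
      (qcond x p * qjoint p / qt x) • ((1 - t)⁻¹ • (p.2 - x))))
    (hint0 : Integrable (fun p =>
      (qcond x p * qjoint p / qt x) • (t⁻¹ • (x - p.1)))) :
    gradient (fun y => Real.log (qt y)) x
      = (σ ^ 2)⁻¹ •
        ((∫ p, (qcond x p * qjoint p / qt x) • ((1 - t)⁻¹ • (p.2 - x)))
          - ∫ p, (qcond x p * qjoint p / qt x) • (t⁻¹ • (x - p.1))) :=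
  marginal_score_posterior_decomposition_general d σ t ht qjoint qcond hqcond qt hqtpos x hqtdiff
    hswap hint1 hint0
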